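/- Let 𝔅₄ be the braid group on four strands, given by the presentation ⟨σ₁, σ₂, σ₃ | σ₁σ₃ = σ₃σ₁, σ₁σ₂σ₁ = σ₂σ₁σ₂, σ₂σ₃σ₂ = σ₃σ₂σ₃⟩. Then 𝔅₄ is isomorphic to the presented group ⟨x, y, z | xz = zx, xyx = yx²y, yxzxy = zxyxz⟩, via the map sending σ₁ ↦ x, σ₂ ↦ yx, σ₃ ↦ zx (i.e., x = σ₁, y = σ₂σ₁⁻¹, z = σ₃σ₁⁻¹). -/

import Mathlib

/-!
STATEMENT 14: The braid group on four strands
`𝔅₄ = ⟨σ₁, σ₂, σ₃ | σ₁σ₃ = σ₃σ₁, σ₁σ₂σ₁ = σ₂σ₁σ₂, σ₂σ₃σ₂ = σ₃σ₂σ₃⟩`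
is isomorphic to `⟨x, y, z | xz = zx, xyx = yx²y, yxzxy = zxyxz⟩` via
`σ₁ ↦ x`, `σ₂ ↦ yx`, `σ₃ ↦ zx`.
-/

open FreeGroup

/-- The standard Artin relators of the braid group `𝔅₄`, with `σᵢ = of (i-1)`. -/
def braidRels : Set (FreeGroup (Fin 3)) :=
  {of 0 * of 2 * (of 2 * of 0)⁻¹,
    of 0 * of 1 * of 0 * (of 1 * of 0 * of 1)⁻¹,
    of 1 * of 2 * of 1 * (of 2 * of 1 * of 2)⁻¹}

/-- Relators of `⟨x, y, z | xz = zx, xyx = yx²y, yxzxy = zxyxz⟩`, with `x = of 0`,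
`y = of 1`, `z = of 2`. -/
def braidRels' : Set (FreeGroup (Fin 3)) :=
  {of 0 * of 2 * (of 2 * of 0)⁻¹,
    of 0 * of 1 * of 0 * (of 1 * of 0 ^ 2 * of 1)⁻¹,
    of 1 * of 0 * of 2 * of 0 * of 1 * (of 2 * of 0 * of 1 * of 0 * of 2)⁻¹}

/-!
Substituting `x = σ₁`, `y = σ₂σ₁⁻¹`, `z = σ₃σ₁⁻¹` is invertible (`σ₂ = yx`, `σ₃ = zx`), and in any
group it turns each braid relation into the corresponding new one up to cancelling a trailing `x`:
`σ₁σ₂σ₁ = σ₂σ₁σ₂` reads `xyx·x = yx·x·yx`, and `σ₂σ₃σ₂ = σ₃σ₂σ₃` reads `yxzxyx = zxyxzx`.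
So the two presentations differ by a Tietze transformation.
-/

section Relations

variable {G : Type*} [Group G]

def SatisfiesBraidRels (a b c : G) : Prop :=
  a * c = c * a ∧ a * b * a = b * a * b ∧ b * c * b = c * b * c

def SatisfiesBraidRels' (x y z : G) : Prop :=
  x * z = z * x ∧ x * y * x = y * x ^ 2 * y ∧ y * x * z * x * y = z * x * y * x * z

theorem lift_braidRels_eq_one_iff (f : Fin 3 → G) :
    (∀ r ∈ braidRels, FreeGroup.lift f r = 1) ↔ SatisfiesBraidRels (f 0) (f 1) (f 2) := by
  simp only [braidRels, Set.forall_mem_insert, Set.mem_singleton_iff, forall_eq, _root_.map_mul,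
    _root_.map_inv, lift_apply_of, mul_inv_eq_one, SatisfiesBraidRels]

theorem lift_braidRels'_eq_one_iff (f : Fin 3 → G) :
    (∀ r ∈ braidRels', FreeGroup.lift f r = 1) ↔ SatisfiesBraidRels' (f 0) (f 1) (f 2) := by
  simp only [braidRels', Set.forall_mem_insert, Set.mem_singleton_iff, forall_eq, _root_.map_mul,
    _root_.map_inv, _root_.map_pow, lift_apply_of, mul_inv_eq_one, SatisfiesBraidRels']

theorem satisfiesBraidRels_iff {a b c : G} :
    SatisfiesBraidRels a b c ↔ SatisfiesBraidRels' a (b * a⁻¹) (c * a⁻¹) := by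
  simp only [SatisfiesBraidRels, SatisfiesBraidRels', pow_two, ← mul_assoc, inv_mul_cancel_right,
    mul_inv_eq_iff_eq_mul, eq_mul_inv_iff_mul_eq]

end Relations

theorem PresentedGroup.lift_of_eq_one_of_mem {α : Type*} {rels : Set (FreeGroup α)}
    {r : FreeGroup α} (hr : r ∈ rels) :
    FreeGroup.lift (PresentedGroup.of (rels := rels)) r = 1 := by
  have : FreeGroup.lift PresentedGroup.of = PresentedGroup.mk rels :=
    FreeGroup.ext_hom _ _ fun _ => lift_apply_of
  rw [this]
  exact PresentedGroup.one_of_mem hr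

theorem satisfiesBraidRels_of :
    SatisfiesBraidRels (PresentedGroup.of 0 : PresentedGroup braidRels) (.of 1) (.of 2) :=
  (lift_braidRels_eq_one_iff _).mp fun _ => PresentedGroup.lift_of_eq_one_of_mem

theorem satisfiesBraidRels'_of :
    SatisfiesBraidRels' (PresentedGroup.of 0 : PresentedGroup braidRels') (.of 1) (.of 2) :=
  (lift_braidRels'_eq_one_iff _).mp fun _ => PresentedGroup.lift_of_eq_one_of_mem

def braidRelsToBraidRels' : PresentedGroup braidRels →* PresentedGroup braidRels' :=
  PresentedGroup.toGroup (f := ![.of 0, .of 1 * .of 0, .of 2 * .of 0]) <| by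
    rw [lift_braidRels_eq_one_iff, satisfiesBraidRels_iff]
    simpa using satisfiesBraidRels'_of

def braidRels'ToBraidRels : PresentedGroup braidRels' →* PresentedGroup braidRels :=
  PresentedGroup.toGroup (f := ![.of 0, .of 1 * (.of 0)⁻¹, .of 2 * (.of 0)⁻¹]) <| by
    rw [lift_braidRels'_eq_one_iff]
    exact satisfiesBraidRels_iff.mp satisfiesBraidRels_of

theorem braidRels'ToBraidRels_comp_braidRelsToBraidRels' :
    braidRels'ToBraidRels.comp braidRelsToBraidRels' = MonoidHom.id _ :=
  PresentedGroup.ext fun i => by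
    fin_cases i <;> simp [braidRelsToBraidRels', braidRels'ToBraidRels, PresentedGroup.toGroup.of]

theorem braidRelsToBraidRels'_comp_braidRels'ToBraidRels :
    braidRelsToBraidRels'.comp braidRels'ToBraidRels = MonoidHom.id _ :=
  PresentedGroup.ext fun i => by
    fin_cases i <;> simp [braidRelsToBraidRels', braidRels'ToBraidRels, PresentedGroup.toGroup.of]

theorem braid_group_four_presentation :
    ∃ e : PresentedGroup braidRels ≃* PresentedGroup braidRels',
      e (PresentedGroup.of 0) = PresentedGroup.of 0 ∧
      e (PresentedGroup.of 1) = PresentedGroup.of 1 * PresentedGroup.of 0 ∧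
      e (PresentedGroup.of 2) = PresentedGroup.of 2 * PresentedGroup.of 0 := by
  refine ⟨braidRelsToBraidRels'.toMulEquiv braidRels'ToBraidRels
    braidRels'ToBraidRels_comp_braidRelsToBraidRels'
    braidRelsToBraidRels'_comp_braidRels'ToBraidRels, ?_, ?_, ?_⟩ <;>
  simp [braidRelsToBraidRels', PresentedGroup.toGroup.of]
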